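/- The 2-dimensional Hausdorff measure on X = ℝ × ℚ_p (with the maximum metric) equals the product of Lebesgue measure on ℝ and the Haar measure on ℚ_p normalized so that ℤ_p has measure 1. -/

import Mathlib

/-!
For `s` of diameter `δ ≤ 1`, `s` lies in the product of an interval of length `δ` and a `p`-adic
ball of radius `δ`, whose Haar measure is at most `δ` since `ℤ_[p]` splits into `p ^ n` translates
of `p ^ n ℤ_[p]`; so `volume.prod μ ≤ μH[2]`. Conversely `[0, 1] × ℤ_[p]` is covered by the
`p ^ (2 n)` boxes `[i p⁻ⁿ, (i + 1) p⁻ⁿ] × (j + p ^ n ℤ_[p])` of diameter `p⁻ⁿ`, so its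
`μH[2]`-measure is at most `1`, its product measure. Hence `μH[2]` is translation invariant, finite
and positive on a compact set with interior, i.e. a Haar measure, and it agrees with `volume.prod μ`
on that set; uniqueness of Haar measure gives equality.
-/

open MeasureTheory Metric Set Filter Topology Function
open scoped ENNReal

lemma ediam_prod_le_of_le {X Y : Type*} [PseudoEMetricSpace X] [PseudoEMetricSpace Y]
    {s : Set X} {t : Set Y} {r : ℝ≥0∞} (hs : ediam s ≤ r) (ht : ediam t ≤ r) :
    ediam (s ×ˢ t) ≤ r :=
  ediam_le fun x hx y hy => by
    rw [Prod.edist_eq]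
    exact max_le ((edist_le_ediam_of_mem hx.1 hy.1).trans hs)
      ((edist_le_ediam_of_mem hx.2 hy.2).trans ht)

lemma IsUltrametricDist.ediam_closedBall_le {X : Type*} [PseudoMetricSpace X]
    [IsUltrametricDist X] (x : X) (r : ℝ) : ediam (closedBall x r) ≤ ENNReal.ofReal r :=
  ediam_le fun y hy z hz => by
    rw [edist_dist]
    exact ENNReal.ofReal_le_ofReal
      ((dist_triangle_max y x z).trans (max_le hy (by rw [dist_comm]; exact hz)))

lemma ENNReal.ofReal_natCast_zpow_neg {a : ℕ} (ha : 0 < a) (n : ℕ) :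
    ENNReal.ofReal ((a : ℝ) ^ (-(n : ℤ))) = ((a : ℝ≥0∞) ^ n)⁻¹ := by
  rw [zpow_neg, zpow_natCast, ← Nat.cast_pow, ENNReal.ofReal_inv_of_pos (by positivity),
    ENNReal.ofReal_natCast, Nat.cast_pow]

lemma Real.Icc_zero_one_subset_iUnion_Icc {N : ℕ} (hN : 0 < N) :
    Icc (0 : ℝ) 1 ⊆ ⋃ i : Fin N, Icc ((i : ℝ) / N) ((i + 1) / N) := by
  have hN' : (0 : ℝ) < N := Nat.cast_pos.2 hN
  rintro x ⟨hx0, hx1⟩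
  rw [mem_iUnion]
  rcases hx1.lt_or_eq with hx1 | rfl
  · have hxN : 0 ≤ x * N := mul_nonneg hx0 hN'.le
    refine ⟨⟨⌊x * N⌋₊, (Nat.floor_lt hxN).2 (by nlinarith)⟩, ?_, ?_⟩
    · rw [div_le_iff₀ hN']
      exact Nat.floor_le hxN
    · rw [le_div_iff₀ hN']
      exact (Nat.lt_floor_add_one _).le
  · refine ⟨⟨N - 1, Nat.sub_lt hN one_pos⟩, ?_, ?_⟩ <;>
      simp [Nat.cast_sub (Nat.one_le_iff_ne_zero.2 hN.ne'), div_le_one hN', hN'.ne']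

namespace MeasureTheory.Measure

section Hausdorff

variable {X Y : Type*} [EMetricSpace X] [EMetricSpace Y]

lemma prod_le_hausdorffMeasure_add [MeasurableSpace X] [MeasurableSpace Y]
    [BorelSpace (X × Y)] (α : Measure X) (β : Measure Y) [SFinite α] [SFinite β]
    {a b : ℝ} (ha : 0 ≤ a) (hb : 0 ≤ b) {ε : ℝ≥0∞} (hε : 0 < ε)
    (hα : ∀ s, ediam s ≤ ε → α s ≤ ediam s ^ a) (hβ : ∀ t, ediam t ≤ ε → β t ≤ ediam t ^ b) :
    α.prod β ≤ μH[a + b] := by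
  refine le_hausdorffMeasure _ _ ε hε fun s hs => ?_
  have hfst : ediam (Prod.fst '' s) ≤ ediam s := by
    simpa using LipschitzWith.prod_fst.ediam_image_le s
  have hsnd : ediam (Prod.snd '' s) ≤ ediam s := by
    simpa using LipschitzWith.prod_snd.ediam_image_le s
  calc α.prod β s ≤ α.prod β ((Prod.fst '' s) ×ˢ (Prod.snd '' s)) := measure_mono subset_prod
    _ = α (Prod.fst '' s) * β (Prod.snd '' s) := Measure.prod_prod _ _
    _ ≤ ediam s ^ a * ediam s ^ b := by
      gcongr
      · exact (hα _ (hfst.trans hs)).trans (ENNReal.rpow_le_rpow hfst ha)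
      · exact (hβ _ (hsnd.trans hs)).trans (ENNReal.rpow_le_rpow hsnd hb)
    _ = ediam s ^ (a + b) := (ENNReal.rpow_add_of_nonneg _ _ ha hb).symm

lemma hausdorffMeasure_le_liminf_card_mul_rpow [MeasurableSpace X] [BorelSpace X]
    {ι : ℕ → Type*} [∀ n, Fintype (ι n)] {d : ℝ} (hd : 0 ≤ d) (s : Set X) (r : ℕ → ℝ≥0∞)
    (hr : Tendsto r atTop (𝓝 0)) (t : ∀ n, ι n → Set X) (ht : ∀ n i, ediam (t n i) ≤ r n)
    (hst : ∀ n, s ⊆ ⋃ i, t n i) :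
    μH[d] s ≤ liminf (fun n => Fintype.card (ι n) * r n ^ d) atTop := by
  refine (hausdorffMeasure_le_liminf_sum d s r hr t (.of_forall ht) (.of_forall hst)).trans ?_
  refine liminf_le_liminf (.of_forall fun n => ?_)
  calc ∑ i, ediam (t n i) ^ d ≤ ∑ _i : ι n, r n ^ d :=
        Finset.sum_le_sum fun i _ => ENNReal.rpow_le_rpow (ht n i) hd
    _ = Fintype.card (ι n) * r n ^ d := by
      rw [Finset.sum_const, Finset.card_univ, nsmul_eq_mul]

end Hausdorff

lemma eq_of_isAddLeftInvariant_of_apply_eq {G : Type*} [AddGroup G] [TopologicalSpace G]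
    [IsTopologicalAddGroup G] [LocallyCompactSpace G] [SecondCountableTopology G]
    [MeasurableSpace G] [BorelSpace G]
    (μ ν : Measure G) [μ.IsAddLeftInvariant] [ν.IsAddHaarMeasure] {K : Set G}
    (hK : IsCompact K) (hK' : (interior K).Nonempty) (hμν : μ K = ν K) : μ = ν := by
  have hν0 : ν K ≠ 0 := (measure_pos_of_nonempty_interior ν hK').ne'
  have hν : ν K ≠ ∞ := hK.measure_ne_top
  have : μ.IsAddHaarMeasure :=
    isAddHaarMeasure_of_isCompact_nonempty_interior μ K hK hK' (hμν ▸ hν0) (hμν ▸ hν)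
  let K₀ : TopologicalSpace.PositiveCompacts G := ⟨⟨K, hK⟩, hK'⟩
  rw [addHaarMeasure_unique μ K₀, addHaarMeasure_unique ν K₀]
  exact congrArg (· • _) hμν

end MeasureTheory.Measure

namespace Padic

variable {p : ℕ} [Fact p.Prime]

lemma closedBall_zero_one_eq_iUnion_natCast (n : ℕ) :
    closedBall (0 : ℚ_[p]) 1 =
      ⋃ j : Fin (p ^ n), closedBall ((j : ℕ) : ℚ_[p]) ((p : ℝ) ^ (-(n : ℤ))) := by
  have hr : (p : ℝ) ^ (-(n : ℤ)) ≤ 1 :=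
    zpow_le_one_of_nonpos₀ (mod_cast (Fact.out : p.Prime).one_lt.le) (by simp)
  refine subset_antisymm (fun x hx => ?_) (iUnion_subset fun j => ?_)
  · have hx' : ‖x‖ ≤ 1 := by simpa using hx
    let z : ℤ_[p] := ⟨x, hx'⟩
    refine mem_iUnion.2 ⟨⟨z.appr n, z.appr_lt n⟩, ?_⟩
    have h := (PadicInt.norm_le_pow_iff_mem_span_pow _ n).2 (PadicInt.appr_spec n z)
    rw [PadicInt.norm_def, PadicInt.coe_sub, PadicInt.coe_natCast] at h
    rwa [mem_closedBall, dist_eq_norm]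
  · have hj : ((j : ℕ) : ℚ_[p]) ∈ closedBall 0 1 := by
      simpa using norm_int_le_one (p := p) (j : ℕ)
    rw [IsUltrametricDist.closedBall_eq_of_mem hj]
    exact closedBall_subset_closedBall hr

lemma pairwise_disjoint_closedBall_natCast (n : ℕ) :
    Pairwise (Disjoint on fun j : Fin (p ^ n) =>
      closedBall ((j : ℕ) : ℚ_[p]) ((p : ℝ) ^ (-(n : ℤ)))) := by
  intro j k hjk
  refine (IsUltrametricDist.closedBall_eq_or_disjoint _ _ _).resolve_left fun h => hjk ?_
  have hkj : ((k : ℕ) : ℚ_[p]) ∈ closedBall ((j : ℕ) : ℚ_[p]) ((p : ℝ) ^ (-(n : ℤ))) :=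
    h ▸ mem_closedBall_self (zpow_nonneg (Nat.cast_nonneg p) _)
  have hk : ‖(((k : ℕ) - (j : ℕ) : ℤ) : ℚ_[p])‖ ≤ (p : ℝ) ^ (-(n : ℤ)) := by
    rw [mem_closedBall, dist_eq_norm] at hkj
    exact_mod_cast hkj
  rw [norm_int_le_pow_iff_dvd, ← Nat.cast_pow, ← Nat.modEq_iff_dvd] at hk
  exact Fin.ext (hk.eq_of_lt_of_lt j.2 k.2)

variable [MeasurableSpace ℚ_[p]] [BorelSpace ℚ_[p]] (μ : Measure ℚ_[p]) [μ.IsAddHaarMeasure]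

lemma pow_mul_addHaar_closedBall (x : ℚ_[p]) (n : ℕ) :
    (p : ℝ≥0∞) ^ n * μ (closedBall x ((p : ℝ) ^ (-(n : ℤ)))) = μ (closedBall 0 1) := by
  rw [closedBall_zero_one_eq_iUnion_natCast n,
    measure_iUnion (pairwise_disjoint_closedBall_natCast n) fun _ => measurableSet_closedBall,
    tsum_fintype]
  simp only [Measure.addHaar_closedBall_center μ _ ((p : ℝ) ^ (-(n : ℤ))), Finset.sum_const,
    Finset.card_univ, Fintype.card_fin, nsmul_eq_mul, Nat.cast_pow]

lemma addHaar_closedBall_le (x : ℚ_[p]) {r : ℝ} (hr₀ : 0 ≤ r) (hr₁ : r ≤ 1) :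
    μ (closedBall x r) ≤ ENNReal.ofReal r * μ (closedBall 0 1) := by
  have hp : (1 : ℝ) < p := mod_cast (Fact.out : p.Prime).one_lt
  rcases hr₀.eq_or_lt with rfl | hr
  · simp
  obtain ⟨k, hkr, hrk⟩ := exists_mem_Ico_zpow hr hp
  -- nonzero `p`-adic norms are powers of `p`
  have hball : closedBall x r = closedBall x ((p : ℝ) ^ k) := by
    refine subset_antisymm (fun y hy => ?_) (closedBall_subset_closedBall hkr)
    rw [mem_closedBall, dist_eq_norm] at hy ⊢
    exact (norm_le_pow_iff_norm_lt_pow_add_one _ k).2 (hy.trans_lt hrk)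
  obtain ⟨n, rfl⟩ := Int.exists_eq_neg_ofNat ((zpow_le_one_iff_right₀ hp).1 (hkr.trans hr₁))
  have hpn : (p : ℝ≥0∞) ^ n ≠ 0 := pow_ne_zero _ (mod_cast (Fact.out : p.Prime).ne_zero)
  calc μ (closedBall x r) = ((p : ℝ≥0∞) ^ n)⁻¹ * μ (closedBall 0 1) := by
        rw [hball, ← pow_mul_addHaar_closedBall μ x n, ← mul_assoc,
          ENNReal.inv_mul_cancel hpn (by simp), one_mul]
    _ ≤ ENNReal.ofReal r * μ (closedBall 0 1) := by
      rw [← ENNReal.ofReal_natCast_zpow_neg (Fact.out : p.Prime).pos]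
      gcongr

lemma addHaar_le_ediam_mul (s : Set ℚ_[p]) (hs : ediam s ≤ 1) :
    μ s ≤ ediam s * μ (closedBall 0 1) := by
  rcases s.eq_empty_or_nonempty with rfl | ⟨b, hb⟩
  · simp
  have hs' : ediam s ≠ ∞ := ne_top_of_le_ne_top ENNReal.one_ne_top hs
  have hdiam : diam s ≤ 1 :=
    ENNReal.toReal_le_of_le_ofReal zero_le_one (by rwa [ENNReal.ofReal_one])
  calc μ s ≤ μ (closedBall b (diam s)) := measure_mono fun y hy =>
        mem_closedBall.2 (dist_le_diam_of_mem (isBounded_iff_ediam_ne_top.2 hs') hy hb)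
    _ ≤ ENNReal.ofReal (diam s) * μ (closedBall 0 1) :=
      addHaar_closedBall_le μ b diam_nonneg hdiam
    _ = ediam s * μ (closedBall 0 1) := by rw [diam, ENNReal.ofReal_toReal hs']

end Padic

lemma hausdorffMeasure_Icc_prod_closedBall_le (p : ℕ) [Fact p.Prime] [MeasurableSpace ℚ_[p]]
    [BorelSpace ℚ_[p]] : μH[2] (Icc (0 : ℝ) 1 ×ˢ closedBall (0 : ℚ_[p]) 1) ≤ 1 := by
  have hp := (Fact.out : p.Prime)
  have hN : ∀ n, 0 < p ^ n := fun n => pow_pos hp.pos n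
  set r : ℕ → ℝ≥0∞ := fun n => ((p ^ n : ℕ) : ℝ≥0∞)⁻¹
  set t : ∀ n : ℕ, Fin (p ^ n) × Fin (p ^ n) → Set (ℝ × ℚ_[p]) := fun n ij =>
    Icc ((ij.1 : ℝ) / (p ^ n : ℕ)) ((ij.1 + 1) / (p ^ n : ℕ)) ×ˢ
      closedBall ((ij.2 : ℕ) : ℚ_[p]) ((p : ℝ) ^ (-(n : ℤ)))
  have hr : Tendsto r atTop (𝓝 0) :=
    ENNReal.tendsto_inv_nat_nhds_zero.comp (tendsto_pow_atTop_atTop_of_one_lt hp.one_lt)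
  have ht : ∀ n ij, ediam (t n ij) ≤ r n := fun n ij => by
    refine ediam_prod_le_of_le (le_of_eq ?_)
      ((IsUltrametricDist.ediam_closedBall_le _ _).trans_eq ?_)
    · rw [Real.ediam_Icc, ← sub_div, add_sub_cancel_left,
        ENNReal.ofReal_div_of_pos (mod_cast hN n), ENNReal.ofReal_one, ENNReal.ofReal_natCast,
        one_div]
    · rw [ENNReal.ofReal_natCast_zpow_neg hp.pos, ← Nat.cast_pow]
  have hst : ∀ n, Icc (0 : ℝ) 1 ×ˢ closedBall (0 : ℚ_[p]) 1 ⊆ ⋃ ij, t n ij := fun n =>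
    (Set.prod_mono (Real.Icc_zero_one_subset_iUnion_Icc (hN n))
      (Padic.closedBall_zero_one_eq_iUnion_natCast n).le).trans (iUnion_prod _ _).ge
  have hsum : ∀ n, (Fintype.card (Fin (p ^ n) × Fin (p ^ n)) : ℝ≥0∞) * r n ^ (2 : ℝ) = 1 :=
    fun n => by
      have hN0 : ((p ^ n : ℕ) : ℝ≥0∞) ≠ 0 := mod_cast (hN n).ne'
      rw [Fintype.card_prod, Fintype.card_fin, Nat.cast_mul, ENNReal.rpow_two, sq,
        mul_mul_mul_comm, ENNReal.mul_inv_cancel hN0 (ENNReal.natCast_ne_top _), one_mul]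
  calc μH[2] (Icc (0 : ℝ) 1 ×ˢ closedBall (0 : ℚ_[p]) 1)
      ≤ liminf (fun n => (Fintype.card (Fin (p ^ n) × Fin (p ^ n)) : ℝ≥0∞) * r n ^ (2 : ℝ))
          atTop :=
        Measure.hausdorffMeasure_le_liminf_card_mul_rpow zero_le_two _ r hr t ht hst
    _ = 1 := by simp only [hsum, liminf_const]

/-- The 2-dimensional Hausdorff measure on `X = ℝ × ℚ_p` (with the maximum metric) equals
the product of Lebesgue measure on `ℝ` and the Haar measure on `ℚ_p` normalized so that
`ℤ_p` has measure `1`. -/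
theorem hausdorff_eq_prod_mixed (p : ℕ) [Fact p.Prime]
    [MeasurableSpace ℚ_[p]] [BorelSpace ℚ_[p]]
    (μ : Measure ℚ_[p]) [μ.IsAddHaarMeasure]
    (hμ : μ {x : ℚ_[p] | ‖x‖ ≤ 1} = 1) :
    (μH[2] : Measure (ℝ × ℚ_[p])) = (volume : Measure ℝ).prod μ := by
  have hμ' : μ (closedBall 0 1) = 1 := by
    rw [← hμ]
    congr 1
    ext
    simp
  set K := Icc (0 : ℝ) 1 ×ˢ closedBall (0 : ℚ_[p]) 1
  have hK : IsCompact K := isCompact_Icc.prod (isCompact_closedBall _ _)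
  have hK' : (interior K).Nonempty := by
    rw [interior_prod_eq, interior_Icc]
    exact (nonempty_Ioo.2 zero_lt_one).prod
      ⟨0, ball_subset_interior_closedBall (mem_ball_self one_pos)⟩
  have hνK : volume.prod μ K = 1 := by
    rw [Measure.prod_prod, Real.volume_Icc, hμ']
    simp
  have hle : volume.prod μ ≤ μH[1 + 1] :=
    Measure.prod_le_hausdorffMeasure_add volume μ zero_le_one zero_le_one one_pos
      (fun s _ => by simpa using Real.volume_le_diam s)
      (fun t ht => by simpa [hμ'] using Padic.addHaar_le_ediam_mul μ t ht)
  rw [one_add_one_eq_two] at hle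
  exact Measure.eq_of_isAddLeftInvariant_of_apply_eq _ _ hK hK'
    (le_antisymm ((hausdorffMeasure_Icc_prod_closedBall_le p).trans hνK.ge) (hle K))
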